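/- Hypergeometric representation of the coefficients C_k. Assume (f_j)_i ≠ 0 for all 1 ≤ j ≤ r and 0 ≤ i ≤ m. Then for every 0 ≤ k ≤ m, C_k = ((−1)^k / k!) · Σ_{i=0}^{k} (−k)_i Π_{j=1}^{r} (f_j + m_j)_i / ( i! Π_{j=1}^{r} (f_j)_i ). -/

import Mathlib

/-!
The explicit formula `(-1)^k k! S(j, k) = ∑ᵢ (-1)^i C(k, i) i^j`, summed against `σ_j`, gives
`Λ C_k = (-1)^k / k! ∑ᵢ (-1)^i C(k, i) P(i)` with `P(x) = ∏ⱼ (f_j + x)_{m_j}`. Each term is then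
rewritten by `(f + i)_n (f)_i = (f)_{n+i} = (f)_n (f + n)_i` and `(-k)_i = (-1)^i C(k, i) i!`.
-/

/-- Pochhammer symbol `(a)ₖ = a(a+1)⋯(a+k−1)` for complex `a`. -/
noncomputable def poch (a : ℂ) (k : ℕ) : ℂ := ∏ i ∈ Finset.range k, (a + i)

/-- Stirling numbers of the second kind `S(n, k)`. -/
def stirling2 : ℕ → ℕ → ℕ
  | 0, 0 => 1
  | 0, _ + 1 => 0
  | _ + 1, 0 => 0
  | n + 1, k + 1 => (k + 1) * stirling2 n (k + 1) + stirling2 n k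

open Finset Polynomial
open scoped Nat

theorem stirling2_eq_stirlingSecond : ∀ n k, stirling2 n k = Nat.stirlingSecond n k
  | 0, 0 | 0, _ + 1 | _ + 1, 0 => rfl
  | n + 1, k + 1 => by
    rw [stirling2, Nat.stirlingSecond_succ_succ, stirling2_eq_stirlingSecond n (k + 1),
      stirling2_eq_stirlingSecond n k]

section AlternatingBinomialSums

variable {R : Type*} [CommRing R]

theorem sum_range_neg_one_pow_mul_choose_succ_mul (k : ℕ) (g : ℕ → R) :
    ∑ i ∈ range (k + 2), (-1) ^ i * ((k + 1).choose i : R) * g i =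
      ∑ i ∈ range (k + 1), (-1) ^ i * (k.choose i : R) * g i
        - ∑ i ∈ range (k + 1), (-1) ^ i * (k.choose i : R) * g (i + 1) := by
  calc ∑ i ∈ range (k + 2), (-1) ^ i * ((k + 1).choose i : R) * g i
      = ∑ i ∈ range (k + 1), ((-1) ^ (i + 1) * (k.choose (i + 1) : R) * g (i + 1)
          - (-1) ^ i * (k.choose i : R) * g (i + 1)) + g 0 := by
        rw [sum_range_succ']
        simp only [Nat.choose_succ_succ', Nat.cast_add, Nat.choose_zero_right]
        congr 1
        · exact sum_congr rfl fun i _ => by ring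
        · simp
    _ = ∑ i ∈ range (k + 2), (-1) ^ i * (k.choose i : R) * g i
          - ∑ i ∈ range (k + 1), (-1) ^ i * (k.choose i : R) * g (i + 1) := by
        rw [sum_sub_distrib, sum_range_succ' _ (k + 1)]
        simp only [Nat.choose_zero_right]
        ring
    _ = _ := by
        rw [sum_range_succ, Nat.choose_succ_self, Nat.cast_zero, mul_zero, zero_mul, add_zero]

theorem sum_range_neg_one_pow_mul_choose_succ_mul_natCast_mul (k : ℕ) (g : ℕ → R) :
    ∑ i ∈ range (k + 2), (-1) ^ i * ((k + 1).choose i : R) * ((i : R) * g i) =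
      -(k + 1) * ∑ i ∈ range (k + 1), (-1) ^ i * (k.choose i : R) * g (i + 1) := by
  rw [sum_range_succ', mul_sum]
  simp only [Nat.cast_zero, zero_mul, mul_zero, add_zero]
  refine sum_congr rfl fun i _ => ?_
  have h := congrArg (Nat.cast : ℕ → R) (Nat.add_one_mul_choose_eq k i)
  push_cast at h ⊢
  linear_combination ((-1) ^ i * g (i + 1)) * h

theorem neg_one_pow_mul_factorial_mul_stirlingSecond (n k : ℕ) :
    (-1) ^ k * (k ! : R) * n.stirlingSecond k =
      ∑ i ∈ range (k + 1), (-1) ^ i * (k.choose i : R) * (i : R) ^ n := by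
  induction n generalizing k with
  | zero =>
    cases k with
    | zero => simp
    | succ k => simpa using (sum_range_neg_one_pow_mul_choose_succ_mul k fun _ => (1 : R)).symm
  | succ n ih =>
    cases k with
    | zero => simp
    | succ k =>
      have hpascal := sum_range_neg_one_pow_mul_choose_succ_mul k (fun i => (i : R) ^ n)
      have habsorb := sum_range_neg_one_pow_mul_choose_succ_mul_natCast_mul k (fun i => (i : R) ^ n)
      simp only [← pow_succ'] at habsorb
      have ih_succ := ih (k + 1)
      rw [Nat.stirlingSecond_succ_succ, habsorb]
      push_cast [Nat.factorial_succ] at hpascal ih_succ ⊢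
      linear_combination (k + 1 : R) * ih_succ - (k + 1 : R) * ih k + (k + 1 : R) * hpascal

end AlternatingBinomialSums

theorem sum_mul_stirlingSecond {K : Type*} [Field K] [CharZero K] (a : ℕ → K) (N k : ℕ) :
    ∑ j ∈ range N, a j * j.stirlingSecond k =
      (-1) ^ k / k ! * ∑ i ∈ range (k + 1), (-1) ^ i * (k.choose i : K) *
        ∑ j ∈ range N, a j * (i : K) ^ j := by
  have hS (j : ℕ) : (j.stirlingSecond k : K) =
      (-1) ^ k / k ! * ∑ i ∈ range (k + 1), (-1) ^ i * (k.choose i : K) * (i : K) ^ j := by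
    have hk : (k ! : K) ≠ 0 := Nat.cast_ne_zero.mpr k.factorial_ne_zero
    rw [← neg_one_pow_mul_factorial_mul_stirlingSecond]
    field_simp
    simp [← pow_mul, pow_mul']
  simp_rw [hS, mul_sum, sum_comm (s := range N)]
  exact sum_congr rfl fun i _ => sum_congr rfl fun j _ => by ring

theorem poch_eq_eval_ascPochhammer (a : ℂ) (k : ℕ) : poch a k = (ascPochhammer ℂ k).eval a := by
  induction k with
  | zero => simp [poch]
  | succ k ih =>
    unfold poch at *
    rw [prod_range_succ, ih, ascPochhammer_succ_right, eval_mul, eval_add, eval_X, eval_natCast]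

theorem poch_neg_natCast (k i : ℕ) : poch (-k) i = (-1) ^ i * k.choose i * i ! := by
  rw [poch_eq_eval_ascPochhammer, ascPochhammer_eval_neg_eq_descPochhammer,
    descPochhammer_eval_eq_descFactorial, Nat.descFactorial_eq_factorial_mul_choose]
  push_cast
  ring

theorem poch_add (a : ℂ) (n i : ℕ) : poch a (n + i) = poch a n * poch (a + n) i := by
  unfold poch
  rw [prod_range_add]
  exact congrArg _ (prod_congr rfl fun x _ => by push_cast; ring)

theorem poch_add_natCast_mul_poch (a : ℂ) (n i : ℕ) :
    poch (a + i) n * poch a i = poch a n * poch (a + n) i := by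
  rw [mul_comm, ← poch_add, ← poch_add, add_comm]

theorem poch_neg_natCast_mul_prod_poch_div {ι : Type*} [Fintype ι] (f : ι → ℂ) (n : ι → ℕ)
    (k i : ℕ) (hn : ∏ j, poch (f j) (n j) ≠ 0) (hi : ∏ j, poch (f j) i ≠ 0) :
    poch (-k) i * (∏ j, poch (f j + n j) i) / (i ! * ∏ j, poch (f j) i) =
      (-1) ^ i * k.choose i * (∏ j, poch (f j + i) (n j)) / ∏ j, poch (f j) (n j) := by
  have hshift : (∏ j, poch (f j + i) (n j)) * ∏ j, poch (f j) i =
      (∏ j, poch (f j) (n j)) * ∏ j, poch (f j + n j) i := by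
    rw [← prod_mul_distrib, ← prod_mul_distrib]
    exact prod_congr rfl fun j _ => poch_add_natCast_mul_poch (f j) (n j) i
  have hfac : (i ! : ℂ) ≠ 0 := Nat.cast_ne_zero.mpr i.factorial_ne_zero
  rw [poch_neg_natCast, div_eq_div_iff (mul_ne_zero hfac hi) hn]
  linear_combination (-(-1) ^ i * (k.choose i : ℂ) * i !) * hshift

theorem coeff_C_hypergeometric_representation_general
    (r : ℕ) (mv : Fin r → ℕ)
    (f : Fin r → ℂ) (m : ℕ)
    (Λ : ℂ) (hΛdef : Λ = ∏ j, poch (f j) (mv j)) (hΛ : Λ ≠ 0)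
    (σc : ℕ → ℂ)
    (hσ : ∀ x : ℂ, ∏ j, poch (f j + x) (mv j) = ∑ j ∈ Finset.range (m + 1), σc j * x ^ j)
    (C : ℕ → ℂ)
    (hC : ∀ k, k ≤ m → C k = Λ⁻¹ * ∑ j ∈ Finset.Icc k m, σc j * (stirling2 j k : ℂ))
    (hf : ∀ j, ∀ i, i ≤ m → poch (f j) i ≠ 0) :
    ∀ k, k ≤ m →
      C k = (-1) ^ k / (Nat.factorial k : ℂ) *
        ∑ i ∈ Finset.range (k + 1),
          poch (-(k : ℂ)) i * (∏ j, poch (f j + mv j) i) /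
            ((Nat.factorial i : ℂ) * ∏ j, poch (f j) i) := by
  intro k hk
  subst hΛdef
  have hIcc : ∑ j ∈ Icc k m, σc j * (stirling2 j k : ℂ) =
      ∑ j ∈ range (m + 1), σc j * (j.stirlingSecond k : ℂ) := by
    simp_rw [stirling2_eq_stirlingSecond]
    refine sum_subset (fun j hj => ?_) fun j hj hj' => ?_
    · simp only [mem_Icc, mem_range] at hj ⊢
      omega
    · simp only [mem_Icc, mem_range, not_and_or, not_le] at hj hj'
      rw [Nat.stirlingSecond_eq_zero_of_lt (by omega), Nat.cast_zero, mul_zero]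
  rw [hC k hk, hIcc, sum_mul_stirlingSecond, mul_left_comm, mul_sum]
  refine congrArg _ (sum_congr rfl fun i hi => ?_)
  rw [← hσ, poch_neg_natCast_mul_prod_poch_div f mv k i hΛ
    (prod_ne_zero_iff.mpr fun j _ => hf j i (by grind)), div_eq_inv_mul]

/-- **Hypergeometric representation of the coefficients `Cₖ`.** -/
theorem coeff_C_hypergeometric_representation
    (r : ℕ) (hr : 0 < r) (mv : Fin r → ℕ) (hmv : ∀ j, 0 < mv j)
    (f : Fin r → ℂ) (m : ℕ) (hm : m = ∑ j, mv j)
    (Λ : ℂ) (hΛdef : Λ = ∏ j, poch (f j) (mv j)) (hΛ : Λ ≠ 0)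
    (σc : ℕ → ℂ)
    (hσ : ∀ x : ℂ, ∏ j, poch (f j + x) (mv j) = ∑ j ∈ Finset.range (m + 1), σc j * x ^ j)
    (C : ℕ → ℂ)
    (hC : ∀ k, k ≤ m → C k = Λ⁻¹ * ∑ j ∈ Finset.Icc k m, σc j * (stirling2 j k : ℂ))
    (hf : ∀ j, ∀ i, i ≤ m → poch (f j) i ≠ 0) :
    ∀ k, k ≤ m →
      C k = (-1) ^ k / (Nat.factorial k : ℂ) *
        ∑ i ∈ Finset.range (k + 1),
          poch (-(k : ℂ)) i * (∏ j, poch (f j + mv j) i) /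
            ((Nat.factorial i : ℂ) * ∏ j, poch (f j) i) :=
  coeff_C_hypergeometric_representation_general r mv f m Λ hΛdef hΛ σc hσ C hC hf
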